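/- Let H be a separable Hilbert space and M : H → Set(H) a β-strongly monotone set-valued operator, i.e. ⟨x − y, u − v⟩ ≥ β·‖x − y‖² whenever u ∈ M(x) and v ∈ M(y), where β > 0, and let z ∈ H with 0 ∈ M(z). Let c, d > 0, r ∈ ℕ with r ≥ 2c/β², set a_n := 1/(β·(n+r)), and consider the Robbins-Monro iteration x_{n+1} := x_n − a_n·y_n, where x_0 and (y_n) are H-valued random variables, F_n := σ(x_0, y_0, …, x_{n−1}, y_{n−1}), E[y_n | F_n] ∈ M(x_n) almost surely for all n, and E[‖y_n‖² | F_n] ≤ c·‖x_n − z‖² + d_n almost surely with nonnegative random variables (d_n) satisfying sup_n E[d_n] ≤ d. Let L > 0 satisfy E[‖x_0 − z‖²] ≤ L. Then for every u ≥ max{2d/β², r·L} and all n ∈ ℕ: E[‖x_n − z‖²] ≤ u/(n+r). -/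

import Mathlib

open MeasureTheory Filter Topology
open scoped ENNReal RealInnerProductSpace

/-!
Write `E n := E[‖x n - z‖²]`. Expanding the square in `x (n+1) - z = (x n - z) - a n • y n`,
the cross term is bounded below through the tower property: since `x n - z` is
`F n`-measurable, `E⟪x n - z, y n⟫ = E⟪x n - z, E[y n | F n]⟫ ≥ β E n` by strong monotonicity
against `0 ∈ M z`. Together with the second-moment bound this gives the deterministic recursion
`E (n+1) ≤ (1 - 2/(n+r) + (c/β²)/(n+r)²) E n + (d/β²)/(n+r)²`, and an induction shows that
`u/(n+r)` is preserved once `u ≥ 2d/β²` and `n + r ≥ 2c/β²`.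
-/

theorem le_div_add_one_of_le_div {t γ δ u E₀ E₁ : ℝ} (ht : 1 ≤ t) (hγ : 2 * γ ≤ t)
    (hδ : 2 * δ ≤ u) (hE₀ : 0 ≤ E₀) (hE₀u : E₀ ≤ u / t)
    (hE₁ : E₁ ≤ (1 - 2 / t + γ / t ^ 2) * E₀ + δ / t ^ 2) :
    E₁ ≤ u / (t + 1) := by
  have htpos : 0 < t := by linarith
  have he : t * E₀ ≤ u := by rwa [le_div_iff₀ htpos, mul_comm] at hE₀u
  have hscaled : t ^ 2 * E₁ ≤ t * E₀ * (t - 3 / 2) + u / 2 := by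
    have h := mul_le_mul_of_nonneg_left hE₁ (sq_nonneg t)
    have expand : t ^ 2 * ((1 - 2 / t + γ / t ^ 2) * E₀ + δ / t ^ 2)
        = (t ^ 2 - 2 * t + γ) * E₀ + δ := by field_simp
    nlinarith
  rw [le_div_iff₀ (by linarith)]
  refine le_of_mul_le_mul_left ?_ (by positivity : 0 < t ^ 2)
  have hu : 0 ≤ u := le_trans (by positivity) he
  rcases le_total (3 / 2) t with h | h
  · have h1 : t ^ 2 * E₁ ≤ u * (t - 1) := by
      nlinarith [mul_le_mul_of_nonneg_right he (sub_nonneg.2 h)]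
    nlinarith [mul_le_mul_of_nonneg_right h1 (by linarith : 0 ≤ t + 1)]
  · have h1 : t ^ 2 * E₁ ≤ u / 2 := by
      nlinarith [mul_nonneg (mul_nonneg htpos.le hE₀) (sub_nonneg.2 h)]
    nlinarith [mul_le_mul_of_nonneg_right h1 (by linarith : 0 ≤ t + 1),
      mul_nonneg hu (mul_nonneg (by linarith : 0 ≤ 2 * t + 1) (sub_nonneg.2 ht))]

theorem le_div_add_of_le_one_sub_two_div {E : ℕ → ℝ} {r γ δ u : ℝ} (hr : 1 ≤ r)
    (hγ : 2 * γ ≤ r) (hδ : 2 * δ ≤ u) (hE : ∀ n, 0 ≤ E n) (hE₀ : r * E 0 ≤ u)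
    (hstep : ∀ n : ℕ, E (n + 1) ≤ (1 - 2 / (n + r) + γ / (n + r) ^ 2) * E n + δ / (n + r) ^ 2)
    (n : ℕ) : E n ≤ u / (n + r) := by
  induction n with
  | zero => rw [Nat.cast_zero, zero_add, le_div_iff₀ (by linarith), mul_comm]; exact hE₀
  | succ n ih =>
    rw [Nat.cast_succ, add_right_comm]
    have hn : (0 : ℝ) ≤ n := n.cast_nonneg
    exact le_div_add_one_of_le_div (by linarith) (by linarith) hδ (hE n) ih (hstep n)

def IsStronglyMonotone {H : Type*} [NormedAddCommGroup H] [InnerProductSpace ℝ H]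
    (M : H → Set H) (β : ℝ) : Prop :=
  ∀ x y u v : H, u ∈ M x → v ∈ M y → β * ‖x - y‖ ^ 2 ≤ ⟪x - y, u - v⟫

section SecondMoments

variable {Ω H : Type*} [NormedAddCommGroup H] [InnerProductSpace ℝ H]
  {m mΩ : MeasurableSpace Ω} {μ : Measure Ω} {f g : Ω → H}

theorem MeasureTheory.MemLp.integrable_inner (hf : MemLp f 2 μ) (hg : MemLp g 2 μ) :
    Integrable (fun ω => ⟪f ω, g ω⟫) μ :=
  memLp_one_iff_integrable.1 ((innerSL ℝ).memLp_of_bilin 1 hf hg)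

theorem integral_norm_sub_smul_sq (a : ℝ) (hf : MemLp f 2 μ) (hg : MemLp g 2 μ) :
    ∫ ω, ‖f ω - a • g ω‖ ^ 2 ∂μ
      = ∫ ω, ‖f ω‖ ^ 2 ∂μ - 2 * a * ∫ ω, ⟪f ω, g ω⟫ ∂μ + a ^ 2 * ∫ ω, ‖g ω‖ ^ 2 ∂μ := by
  have hpointwise : ∀ ω, ‖f ω - a • g ω‖ ^ 2
      = ‖f ω‖ ^ 2 - 2 * a * ⟪f ω, g ω⟫ + a ^ 2 * ‖g ω‖ ^ 2 := fun ω => by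
    rw [norm_sub_sq_real, real_inner_smul_right, norm_smul, mul_pow, Real.norm_eq_abs, sq_abs]
    ring
  have hf2 := hf.integrable_norm_pow two_ne_zero
  have hfg := (hf.integrable_inner hg).const_mul (2 * a)
  simp only [hpointwise]
  rw [integral_add, integral_sub hf2 hfg, integral_const_mul, integral_const_mul]
  exacts [hf2.sub hfg, (hg.integrable_norm_pow two_ne_zero).const_mul _]

variable [CompleteSpace H] [IsFiniteMeasure μ]

theorem integral_inner_condExp (hm : m ≤ mΩ)
    (hfm : AEStronglyMeasurable[m] f μ) (hf : MemLp f 2 μ) (hg : MemLp g 2 μ) :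
    ∫ ω, ⟪f ω, (μ[g | m]) ω⟫ ∂μ = ∫ ω, ⟪f ω, g ω⟫ ∂μ := by
  have := isFiniteMeasure_trim (μ := μ) hm
  rw [← integral_condExp hm (f := fun ω => ⟪f ω, g ω⟫)]
  exact integral_congr_ae (condExp_bilin_of_aestronglyMeasurable_left (innerSL ℝ) hfm
    (hf.integrable_inner hg) (hg.integrable one_le_two)).symm

theorem IsStronglyMonotone.mul_integral_le_integral_inner {M : H → Set H} {β : ℝ}
    (hM : IsStronglyMonotone M β) {z : H} (hz : (0 : H) ∈ M z) (hm : m ≤ mΩ)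
    (hfm : AEStronglyMeasurable[m] (fun ω => f ω - z) μ) (hf : MemLp (fun ω => f ω - z) 2 μ)
    (hg : MemLp g 2 μ) (hmem : ∀ᵐ ω ∂μ, (μ[g | m]) ω ∈ M (f ω)) :
    β * ∫ ω, ‖f ω - z‖ ^ 2 ∂μ ≤ ∫ ω, ⟪f ω - z, g ω⟫ ∂μ := by
  rw [← integral_inner_condExp hm hfm hf hg, ← integral_const_mul]
  refine integral_mono_ae ((hf.integrable_norm_pow two_ne_zero).const_mul β)
    (hf.integrable_inner (hg.condExp one_le_two)) ?_
  filter_upwards [hmem] with ω hω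
  simpa only [sub_zero] using hM _ _ _ _ hω hz

theorem integral_le_of_condExp_le {φ ψ : Ω → ℝ} (hm : m ≤ mΩ) (hψ : Integrable ψ μ)
    (h : μ[φ | m] ≤ᵐ[μ] ψ) : ∫ ω, φ ω ∂μ ≤ ∫ ω, ψ ω ∂μ := by
  have := isFiniteMeasure_trim (μ := μ) hm
  rw [← integral_condExp hm]
  exact integral_mono_ae integrable_condExp hψ h

theorem IsStronglyMonotone.integral_norm_sub_smul_sub_sq_le {M : H → Set H} {β : ℝ}
    (hM : IsStronglyMonotone M β) {z : H} (hz : (0 : H) ∈ M z) (hm : m ≤ mΩ)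
    {a c d : ℝ} (ha : 0 ≤ a) {D : Ω → ℝ}
    (hfm : AEStronglyMeasurable[m] (fun ω => f ω - z) μ) (hf : MemLp (fun ω => f ω - z) 2 μ)
    (hg : MemLp g 2 μ) (hmem : ∀ᵐ ω ∂μ, (μ[g | m]) ω ∈ M (f ω))
    (hbd : ∀ᵐ ω ∂μ, (μ[fun ω => ‖g ω‖ ^ 2 | m]) ω ≤ c * ‖f ω - z‖ ^ 2 + D ω)
    (hD : Integrable D μ) (hDd : ∫ ω, D ω ∂μ ≤ d) :
    ∫ ω, ‖f ω - a • g ω - z‖ ^ 2 ∂μ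
      ≤ (1 - 2 * a * β + a ^ 2 * c) * ∫ ω, ‖f ω - z‖ ^ 2 ∂μ + a ^ 2 * d := by
  have hf2 := hf.integrable_norm_pow two_ne_zero
  have hinner := hM.mul_integral_le_integral_inner hz hm hfm hf hg hmem
  have hsecond : ∫ ω, ‖g ω‖ ^ 2 ∂μ ≤ c * ∫ ω, ‖f ω - z‖ ^ 2 ∂μ + d := calc
    ∫ ω, ‖g ω‖ ^ 2 ∂μ ≤ ∫ ω, (c * ‖f ω - z‖ ^ 2 + D ω) ∂μ :=
      integral_le_of_condExp_le hm ((hf2.const_mul c).add hD) hbd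
    _ = c * ∫ ω, ‖f ω - z‖ ^ 2 ∂μ + ∫ ω, D ω ∂μ := by
      rw [integral_add (hf2.const_mul c) hD, integral_const_mul]
    _ ≤ c * ∫ ω, ‖f ω - z‖ ^ 2 ∂μ + d := by linarith
  simp_rw [sub_right_comm _ (a • _) z]
  rw [integral_norm_sub_smul_sq a hf hg]
  nlinarith [mul_le_mul_of_nonneg_left hinner (by positivity : 0 ≤ 2 * a),
    mul_le_mul_of_nonneg_left hsecond (sq_nonneg a)]

end SecondMoments

section History

variable {Ω H : Type*} [MeasurableSpace H] {x y : ℕ → Ω → H}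

abbrev historySigma (x y : ℕ → Ω → H) (n : ℕ) : MeasurableSpace Ω :=
  MeasurableSpace.comap (x 0) inferInstance ⊔
    ⨆ i ∈ Finset.range n,
      (MeasurableSpace.comap (x i) inferInstance ⊔ MeasurableSpace.comap (y i) inferInstance)

theorem historySigma_mono : Monotone (historySigma x y) := fun _ _ hmn =>
  sup_le_sup_left (biSup_mono fun _ hi =>
    Finset.mem_range.2 ((Finset.mem_range.1 hi).trans_le hmn)) _

theorem measurable_historySigma_zero (n : ℕ) : Measurable[historySigma x y n] (x 0) :=
  Measurable.of_comap_le le_sup_left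

theorem measurable_historySigma_succ (n : ℕ) : Measurable[historySigma x y (n + 1)] (y n) :=
  Measurable.of_comap_le <| le_sup_of_le_right <| le_sup_right.trans <|
    le_iSup₂ (f := fun i (_ : i ∈ Finset.range (n + 1)) =>
      MeasurableSpace.comap (x i) inferInstance ⊔ MeasurableSpace.comap (y i) inferInstance)
      n (Finset.self_mem_range_succ n)

theorem historySigma_le {mΩ : MeasurableSpace Ω} (hx : ∀ n, Measurable (x n))
    (hy : ∀ n, Measurable (y n)) (n : ℕ) : historySigma x y n ≤ mΩ :=
  sup_le (hx 0).comap_le (iSup₂_le fun i _ => sup_le (hx i).comap_le (hy i).comap_le)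

theorem measurable_of_eq_sub_smul [AddGroup H] [SMul ℝ H] [MeasurableSub₂ H]
    [MeasurableConstSMul ℝ H] {ℱ : ℕ → MeasurableSpace Ω} (hℱ : Monotone ℱ) (a : ℕ → ℝ)
    (hrec : ∀ n ω, x (n + 1) ω = x n ω - a n • y n ω) (hx0 : Measurable[ℱ 0] (x 0))
    (hy : ∀ n, Measurable[ℱ (n + 1)] (y n)) (n : ℕ) : Measurable[ℱ n] (x n) := by
  induction n with
  | zero => exact hx0
  | succ n ih =>
    rw [show x (n + 1) = x n - a n • y n from funext (hrec n)]
    exact (ih.mono (hℱ n.le_succ) le_rfl).sub ((hy n).const_smul (a n))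

end History

theorem robbins_monro_strongly_monotone_fast_rate_general
    {Ω : Type*} {mΩ : MeasurableSpace Ω} {P : Measure Ω} [IsProbabilityMeasure P]
    {H : Type*} [NormedAddCommGroup H] [InnerProductSpace ℝ H] [CompleteSpace H]
    [TopologicalSpace.SeparableSpace H] [MeasurableSpace H] [BorelSpace H]
    (Mop : H → Set H) (β : ℝ) (hβ : 0 < β)
    -- β-strong monotonicity
    (hmono : ∀ x' y' u v : H, u ∈ Mop x' → v ∈ Mop y' →
        β * ‖x' - y'‖^2 ≤ ⟪x' - y', u - v⟫)
    (z : H) (hz : (0:H) ∈ Mop z)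
    (c d : ℝ) (hc : 0 < c)
    (r : ℕ) (hr : 2*c/β^2 ≤ (r : ℝ))
    (a : ℕ → ℝ) (ha : ∀ n : ℕ, a n = 1 / (β * ((n : ℝ) + (r : ℝ))))
    (x y : ℕ → Ω → H)
    (hx0meas : Measurable (x 0)) (hymeas : ∀ n, Measurable (y n))
    (hy2int : ∀ n, Integrable (fun ω => ‖y n ω‖^2) P)
    (hx2int : ∀ n, Integrable (fun ω => ‖x n ω - z‖^2) P)
    -- the Robbins-Monro iteration
    (hrec : ∀ n : ℕ, ∀ ω, x (n+1) ω = x n ω - a n • y n ω)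
    -- F_n := σ(x_0, y_0, …, x_{n−1}, y_{n−1})
    (ℱ : ℕ → MeasurableSpace Ω)
    (hℱ : ∀ n, ℱ n = MeasurableSpace.comap (x 0) inferInstance ⊔
        ⨆ i ∈ Finset.range n,
          (MeasurableSpace.comap (x i) inferInstance ⊔
            MeasurableSpace.comap (y i) inferInstance))
    -- E[y_n|F_n] ∈ M(x_n) a.s.
    (hmem : ∀ n, ∀ᵐ ω ∂P, (P[y n | ℱ n]) ω ∈ Mop (x n ω))
    -- E[‖y_n‖²|F_n] ≤ c‖x_n − z‖² + d_n a.s. with sup_n E[d_n] ≤ d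
    (dseq : ℕ → Ω → ℝ) (hdint : ∀ n, Integrable (dseq n) P)
    (hdsup : ∀ n, ∫ ω, dseq n ω ∂P ≤ d)
    (hbd : ∀ n, ∀ᵐ ω ∂P, (P[fun ω' => ‖y n ω'‖^2 | ℱ n]) ω ≤ c * ‖x n ω - z‖^2 + dseq n ω)
    (L : ℝ)
    -- E[‖x_0 − z‖²] ≤ L
    (hL : ∫ ω, ‖x 0 ω - z‖^2 ∂P ≤ L) :
    ∀ u : ℝ, max (2*d/β^2) ((r : ℝ) * L) ≤ u →
      ∀ n : ℕ, ∫ ω, ‖x n ω - z‖^2 ∂P ≤ u / ((n : ℝ) + (r : ℝ)) := by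
  intro u hu n
  have : SecondCountableTopology H := UniformSpace.secondCountable_of_separable H
  obtain rfl : ℱ = historySigma x y := funext hℱ
  have hxmeas := measurable_of_eq_sub_smul monotone_const a hrec hx0meas hymeas
  have hadapted := measurable_of_eq_sub_smul historySigma_mono a hrec
    (measurable_historySigma_zero 0) measurable_historySigma_succ
  have hr1 : (1 : ℝ) ≤ r :=
    Nat.one_le_cast.2 (Nat.cast_pos.1 ((by positivity : 0 < 2 * c / β ^ 2).trans_le hr))
  have hM : IsStronglyMonotone Mop β := hmono
  have hx2 (n : ℕ) : MemLp (fun ω => x n ω - z) 2 P :=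
    (memLp_two_iff_integrable_sq_norm ((hxmeas n).sub_const z).aestronglyMeasurable).2 (hx2int n)
  have hy2 (n : ℕ) : MemLp (y n) 2 P :=
    (memLp_two_iff_integrable_sq_norm (hymeas n).aestronglyMeasurable).2 (hy2int n)
  have hstep (n : ℕ) : ∫ ω, ‖x (n + 1) ω - z‖ ^ 2 ∂P ≤
      (1 - 2 / (n + r) + c / β ^ 2 / (n + r) ^ 2) * ∫ ω, ‖x n ω - z‖ ^ 2 ∂P
        + d / β ^ 2 / (n + r) ^ 2 := by
    have ha0 : 0 ≤ a n := by rw [ha n]; positivity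
    have h := hM.integral_norm_sub_smul_sub_sq_le hz (historySigma_le hxmeas hymeas n) ha0
      ((hadapted n).sub_const z).aestronglyMeasurable (hx2 n) (hy2 n) (hmem n) (hbd n)
      (hdint n) (hdsup n)
    simp_rw [hrec n]
    convert h using 2 <;> rw [ha n] <;> field_simp
  have hγ : 2 * (c / β ^ 2) ≤ r := by rwa [mul_div_assoc']
  have hδ : 2 * (d / β ^ 2) ≤ u := by rw [mul_div_assoc']; exact (le_max_left _ _).trans hu
  have hE₀ : r * ∫ ω, ‖x 0 ω - z‖ ^ 2 ∂P ≤ u :=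
    (mul_le_mul_of_nonneg_left hL r.cast_nonneg).trans ((le_max_right _ _).trans hu)
  exact le_div_add_of_le_one_sub_two_div (E := fun n => ∫ ω, ‖x n ω - z‖ ^ 2 ∂P) hr1 hγ hδ
    (fun n => integral_nonneg fun ω => sq_nonneg _) hE₀ hstep n

/-- `O(1/n)` rate in mean square for the Robbins-Monro scheme on a β-strongly monotone
set-valued operator: with `a_n := 1/(β(n+r))` and `r ≥ 2c/β²`,
`E[‖x_n − z‖²] ≤ u/(n+r)` for every `u ≥ max{2d/β², rL}`. -/
theorem robbins_monro_strongly_monotone_fast_rate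
    {Ω : Type*} {mΩ : MeasurableSpace Ω} {P : Measure Ω} [IsProbabilityMeasure P]
    {H : Type*} [NormedAddCommGroup H] [InnerProductSpace ℝ H] [CompleteSpace H]
    [TopologicalSpace.SeparableSpace H] [MeasurableSpace H] [BorelSpace H]
    (Mop : H → Set H) (β : ℝ) (hβ : 0 < β)
    -- β-strong monotonicity
    (hmono : ∀ x' y' u v : H, u ∈ Mop x' → v ∈ Mop y' →
        β * ‖x' - y'‖^2 ≤ ⟪x' - y', u - v⟫)
    (z : H) (hz : (0:H) ∈ Mop z)
    (c d : ℝ) (hc : 0 < c) (hd : 0 < d)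
    (r : ℕ) (hr : 2*c/β^2 ≤ (r : ℝ))
    (a : ℕ → ℝ) (ha : ∀ n : ℕ, a n = 1 / (β * ((n : ℝ) + (r : ℝ))))
    (x y : ℕ → Ω → H)
    (hx0meas : Measurable (x 0)) (hymeas : ∀ n, Measurable (y n))
    (hyint : ∀ n, Integrable (y n) P)
    (hy2int : ∀ n, Integrable (fun ω => ‖y n ω‖^2) P)
    (hx2int : ∀ n, Integrable (fun ω => ‖x n ω - z‖^2) P)
    -- the Robbins-Monro iteration
    (hrec : ∀ n : ℕ, ∀ ω, x (n+1) ω = x n ω - a n • y n ω)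
    -- F_n := σ(x_0, y_0, …, x_{n−1}, y_{n−1})
    (ℱ : ℕ → MeasurableSpace Ω)
    (hℱ : ∀ n, ℱ n = MeasurableSpace.comap (x 0) inferInstance ⊔
        ⨆ i ∈ Finset.range n,
          (MeasurableSpace.comap (x i) inferInstance ⊔
            MeasurableSpace.comap (y i) inferInstance))
    -- E[y_n|F_n] ∈ M(x_n) a.s.
    (hmem : ∀ n, ∀ᵐ ω ∂P, (P[y n | ℱ n]) ω ∈ Mop (x n ω))
    -- E[‖y_n‖²|F_n] ≤ c‖x_n − z‖² + d_n a.s. with sup_n E[d_n] ≤ d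
    (dseq : ℕ → Ω → ℝ) (hdnn : ∀ n, 0 ≤ᵐ[P] dseq n) (hdint : ∀ n, Integrable (dseq n) P)
    (hdsup : ∀ n, ∫ ω, dseq n ω ∂P ≤ d)
    (hbd : ∀ n, ∀ᵐ ω ∂P, (P[fun ω' => ‖y n ω'‖^2 | ℱ n]) ω ≤ c * ‖x n ω - z‖^2 + dseq n ω)
    (L : ℝ) (hLpos : 0 < L)
    -- E[‖x_0 − z‖²] ≤ L
    (hL : ∫ ω, ‖x 0 ω - z‖^2 ∂P ≤ L) :
    ∀ u : ℝ, max (2*d/β^2) ((r : ℝ) * L) ≤ u →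
      ∀ n : ℕ, ∫ ω, ‖x n ω - z‖^2 ∂P ≤ u / ((n : ℝ) + (r : ℝ)) :=
  robbins_monro_strongly_monotone_fast_rate_general (mΩ := mΩ) Mop β hβ hmono z hz c d hc r hr a ha
    x y hx0meas hymeas hy2int hx2int hrec ℱ hℱ hmem dseq hdint hdsup hbd L hL
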